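/- Let E ⊆ ℂ^6⊗ℂ^4⊗ℂ^6 be the linear span of the set {x^2_1⊗y⊗z : y ∈ ⟨y^2_1,y^2_2⟩, z ∈ ⟨z^1_3,z^2_3⟩} ∪ {x^1_2⊗(s y^2_1 − t y^2_2)⊗(s z^2_3 + t z^1_3) : s,t ∈ ℂ} ∪ {T_{BCLRS,3}}. Then E is 8-dimensional, and a nonzero simple tensor a⊗b⊗c lies in E if and only if it has one of the following two forms: (i) x^2_1⊗(λ y^2_1 + μ y^2_2)⊗(ν z^1_3 + ρ z^2_3) for some scalars λ, μ, ν, ρ (a point of the sub-Segre surface [x^2_1]×ℙ⟨y^2_1,y^2_2⟩×ℙ⟨z^1_3,z^2_3⟩), or (ii) (σ x^1_2 + τ x^2_1)⊗(s y^2_1 − t y^2_2)⊗(s z^2_3 + t z^1_3) for some scalars σ, τ, s, t (a point of the one-parameter family of lines joining the sub-Segre surface to the plane conic {x^1_2⊗(s y^2_1 − t y^2_2)⊗(s z^2_3 + t z^1_3)}). -/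

import Mathlib

/-- A simple (rank-one) tensor in coordinates: `(u ⊗ v ⊗ w)_{ijk} = u_i v_j w_k`. -/
def simpleTensor {ι₁ ι₂ ι₃ : Type} (u : ι₁ → ℂ) (v : ι₂ → ℂ) (w : ι₃ → ℂ) :
    ι₁ → ι₂ → ι₃ → ℂ :=
  fun i j k => u i * v j * w k

/-- The set of tensors of rank at most `r`: sums of `r` simple tensors. -/
def rankAtMost (ι₁ ι₂ ι₃ : Type) (r : ℕ) : Set (ι₁ → ι₂ → ι₃ → ℂ) :=
  {T | ∃ u : Fin r → ι₁ → ℂ, ∃ v : Fin r → ι₂ → ℂ, ∃ w : Fin r → ι₃ → ℂ,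
    T = ∑ s : Fin r, simpleTensor (u s) (v s) (w s)}

/-- The border rank of a tensor: the least `r` such that `T` lies in the closure of the
set of tensors of rank at most `r`. -/
noncomputable def borderRank {ι₁ ι₂ ι₃ : Type} (T : ι₁ → ι₂ → ι₃ → ℂ) : ℕ :=
  sInf {r : ℕ | T ∈ closure (rankAtMost ι₁ ι₂ ι₃ r)}

/-- The matrix multiplication tensor `M_{⟨n,m,p⟩} = ∑ x^i_j ⊗ y^j_k ⊗ z^k_i`
in coordinates: the first factor is indexed by pairs `(i,j)`, the second by `(j,k)`,
the third by `(k,i)`. -/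
def matMulTensor (n m p : ℕ) :
    (Fin n × Fin m) → (Fin m × Fin p) → (Fin p × Fin n) → ℂ :=
  fun x y z => if x.2 = y.1 ∧ y.2 = z.1 ∧ z.2 = x.1 then 1 else 0

/-- The BCLRS tensor `T_{BCLRS,m} = M_{⟨m,2,2⟩} − x^1_1 ⊗ (y^1_1 ⊗ z^1_1 + y^1_2 ⊗ z^2_1)`
(indices written 1-based in the literature, 0-based here). -/
def TBCLRS (m : ℕ) : (Fin m × Fin 2) → (Fin 2 × Fin 2) → (Fin 2 × Fin m) → ℂ :=
  fun x y z =>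
    matMulTensor m 2 2 x y z -
      (if x.1.val = 0 ∧ x.2.val = 0 then 1 else 0) *
        ((if y.1.val = 0 ∧ y.2.val = 0 then 1 else 0) *
            (if z.1.val = 0 ∧ z.2.val = 0 then 1 else 0) +
          (if y.1.val = 0 ∧ y.2.val = 1 then 1 else 0) *
            (if z.1.val = 1 ∧ z.2.val = 0 then 1 else 0))

/-- The standard basis vector `e_{(i,j)}` of a coordinate space indexed by pairs. -/
def unitVec {α β : Type} [DecidableEq α] [DecidableEq β] (i : α) (j : β) : α × β → ℂ :=
  fun p => if p = (i, j) then 1 else 0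

/-- Basis vectors (0-based indices): `x^i_j`, `y^j_k`, `z^k_i`. -/
def x21 : Fin 3 × Fin 2 → ℂ := unitVec 1 0
def x12 : Fin 3 × Fin 2 → ℂ := unitVec 0 1
def y21 : Fin 2 × Fin 2 → ℂ := unitVec 1 0
def y22 : Fin 2 × Fin 2 → ℂ := unitVec 1 1
def z13 : Fin 2 × Fin 3 → ℂ := unitVec 0 2
def z23 : Fin 2 × Fin 3 → ℂ := unitVec 1 2

/-- The 8-plane `E^{AS,3}`: the span of the sub-Segre surface
`x^2_1 ⊗ ⟨y^2_1,y^2_2⟩ ⊗ ⟨z^1_3,z^2_3⟩`, the conic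
`{x^1_2 ⊗ (s y^2_1 − t y^2_2) ⊗ (s z^2_3 + t z^1_3)}` and `T_{BCLRS,3}`. -/
noncomputable def EAS3 :
    Submodule ℂ ((Fin 3 × Fin 2) → (Fin 2 × Fin 2) → (Fin 2 × Fin 3) → ℂ) :=
  Submodule.span ℂ
    ({T | ∃ v ∈ Submodule.span ℂ {y21, y22}, ∃ w ∈ Submodule.span ℂ {z13, z23},
        T = simpleTensor x21 v w} ∪
      {T | ∃ s t : ℂ, T = simpleTensor x12 (s • y21 - t • y22) (s • z23 + t • z13)} ∪
      {TBCLRS 3})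

/-!
`E^{AS,3}` has the basis `x^2_1 ⊗ y^2_j ⊗ z^k_3`, `x^1_2 ⊗ y^2_1 ⊗ z^2_3`, `x^1_2 ⊗ y^2_2 ⊗ z^1_3`,
`x^1_2 ⊗ (y^2_1 ⊗ z^1_3 − y^2_2 ⊗ z^2_3)`, `T_{BCLRS,3}`, which is dual to evaluation at eight
coordinates. In a rank-one element the coefficient of `T_{BCLRS,3}` vanishes by a `2 × 2` minor of
the slice `y^1_1`, so the tensor lies in `⟨x^1_2, x^2_1⟩ ⊗ ⟨y^2_1, y^2_2⟩ ⊗ ⟨z^1_3, z^2_3⟩` and so do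
its factors. The one remaining linear condition, `a_{x^1_2} (b_{y^2_1} c_{z^1_3} + b_{y^2_2} c_{z^2_3}) = 0`,
says that either `a ∈ ⟨x^2_1⟩` (the sub-Segre surface) or `b ⊗ c` is a point of the conic.
-/

local notation "𝕋" => (Fin 3 × Fin 2) → (Fin 2 × Fin 2) → (Fin 2 × Fin 3) → ℂ

section SimpleTensor

variable {ι₁ ι₂ ι₃ : Type} {u : ι₁ → ℂ} {v : ι₂ → ℂ} {w : ι₃ → ℂ}

theorem simpleTensor_apply_mul_apply_comm (u : ι₁ → ℂ) (v : ι₂ → ℂ) (w : ι₃ → ℂ)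
    (i i' : ι₁) (j : ι₂) (k k' : ι₃) :
    simpleTensor u v w i j k * simpleTensor u v w i' j k' =
      simpleTensor u v w i j k' * simpleTensor u v w i' j k := by
  simp only [simpleTensor]
  ring

theorem simpleTensor_ne_zero_iff : simpleTensor u v w ≠ 0 ↔ u ≠ 0 ∧ v ≠ 0 ∧ w ≠ 0 := by
  constructor
  · intro h
    refine ⟨?_, ?_, ?_⟩ <;> rintro rfl <;> exact h (by funext; simp [simpleTensor])
  · rintro ⟨hu, hv, hw⟩ h
    obtain ⟨i, hi : u i ≠ 0⟩ := Function.ne_iff.mp hu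
    obtain ⟨j, hj : v j ≠ 0⟩ := Function.ne_iff.mp hv
    obtain ⟨k, hk : w k ≠ 0⟩ := Function.ne_iff.mp hw
    simpa [simpleTensor, hi, hj, hk] using congrFun (congrFun (congrFun h i) j) k

theorem eq_zero_of_simpleTensor_slice_left (hT : simpleTensor u v w ≠ 0) {i : ι₁}
    (h : ∀ j k, simpleTensor u v w i j k = 0) : u i = 0 := by
  obtain ⟨-, hv, hw⟩ := simpleTensor_ne_zero_iff.mp hT
  obtain ⟨j, hj : v j ≠ 0⟩ := Function.ne_iff.mp hv
  obtain ⟨k, hk : w k ≠ 0⟩ := Function.ne_iff.mp hw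
  simpa [simpleTensor, hj, hk] using h j k

theorem eq_zero_of_simpleTensor_slice_mid (hT : simpleTensor u v w ≠ 0) {j : ι₂}
    (h : ∀ i k, simpleTensor u v w i j k = 0) : v j = 0 := by
  obtain ⟨hu, -, hw⟩ := simpleTensor_ne_zero_iff.mp hT
  obtain ⟨i, hi : u i ≠ 0⟩ := Function.ne_iff.mp hu
  obtain ⟨k, hk : w k ≠ 0⟩ := Function.ne_iff.mp hw
  simpa [simpleTensor, hi, hk] using h i k

theorem eq_zero_of_simpleTensor_slice_right (hT : simpleTensor u v w ≠ 0) {k : ι₃}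
    (h : ∀ i j, simpleTensor u v w i j k = 0) : w k = 0 := by
  obtain ⟨hu, hv, -⟩ := simpleTensor_ne_zero_iff.mp hT
  obtain ⟨i, hi : u i ≠ 0⟩ := Function.ne_iff.mp hu
  obtain ⟨j, hj : v j ≠ 0⟩ := Function.ne_iff.mp hv
  simpa [simpleTensor, hi, hj] using h i j

end SimpleTensor

theorem eq_smul_unitVec_add_smul_unitVec {α β : Type} [DecidableEq α] [DecidableEq β]
    (f : α × β → ℂ) {i i' : α} {j j' : β} (hne : (i, j) ≠ (i', j'))
    (hf : ∀ r, r ≠ (i, j) → r ≠ (i', j') → f r = 0) :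
    f = f (i, j) • unitVec i j + f (i', j') • unitVec i' j' := by
  funext r
  by_cases h : r = (i, j)
  · subst h
    simp [unitVec, hne]
  by_cases h' : r = (i', j')
  · subst h'
    simp [unitVec, Ne.symm hne]
  simp [unitVec, h, h', hf r h h']

theorem exists_eq_neg_mul_and_eq_mul_of_mul_add_mul_eq_zero {K : Type*} [Field K]
    {p q u v : K} (hpq : p ≠ 0 ∨ q ≠ 0) (h : p * u + q * v = 0) :
    ∃ μ, u = -q * μ ∧ v = p * μ := by
  rcases hpq with hp | hq
  · exact ⟨v / p, by field_simp; linear_combination h, by field_simp⟩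
  · exact ⟨-u / q, by field_simp, by field_simp; linear_combination h⟩

theorem simpleTensor_cases_of_mul_eq_zero {ι₁ ι₂ ι₃ : Type} (x x' : ι₁ → ℂ) (y y' : ι₂ → ℂ)
    (z z' : ι₃ → ℂ) {σ τ p q r r' : ℂ} (hpq : p ≠ 0 ∨ q ≠ 0) (h : σ * (p * r + q * r') = 0) :
    (∃ lam mu nu rho : ℂ, simpleTensor (σ • x + τ • x') (p • y + q • y') (r • z + r' • z') =
        simpleTensor x' (lam • y + mu • y') (nu • z + rho • z')) ∨
      (∃ sig tau s t : ℂ, simpleTensor (σ • x + τ • x') (p • y + q • y') (r • z + r' • z') =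
        simpleTensor (sig • x + tau • x') (s • y - t • y') (s • z' + t • z)) := by
  rcases mul_eq_zero.mp h with rfl | hconic
  · refine .inl ⟨τ * p, τ * q, r, r', ?_⟩
    funext i j k
    simp only [simpleTensor, Pi.add_apply, Pi.smul_apply, smul_eq_mul]
    ring
  · obtain ⟨μ, rfl, rfl⟩ := exists_eq_neg_mul_and_eq_mul_of_mul_add_mul_eq_zero hpq hconic
    refine .inr ⟨μ * σ, μ * τ, p, -q, ?_⟩
    funext i j k
    simp only [simpleTensor, Pi.add_apply, Pi.sub_apply, Pi.smul_apply, smul_eq_mul]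
    ring

namespace EAS3

def basisTensor : Fin 8 → 𝕋 :=
  ![simpleTensor x21 y21 z13, simpleTensor x21 y21 z23, simpleTensor x21 y22 z13,
    simpleTensor x21 y22 z23, simpleTensor x12 y21 z23, simpleTensor x12 y22 z13,
    simpleTensor x12 y21 z13 - simpleTensor x12 y22 z23, TBCLRS 3]

def point : Fin 8 → (Fin 3 × Fin 2) × (Fin 2 × Fin 2) × (Fin 2 × Fin 3) :=
  ![((1, 0), (1, 0), (0, 2)), ((1, 0), (1, 0), (1, 2)), ((1, 0), (1, 1), (0, 2)),
    ((1, 0), (1, 1), (1, 2)), ((0, 1), (1, 0), (1, 2)), ((0, 1), (1, 1), (0, 2)),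
    ((0, 1), (1, 0), (0, 2)), ((2, 0), (0, 0), (0, 2))]

def coord : 𝕋 →ₗ[ℂ] Fin 8 → ℂ where
  toFun T j := T (point j).1 (point j).2.1 (point j).2.2
  map_add' _ _ := rfl
  map_smul' _ _ := rfl

theorem coord_basisTensor (i : Fin 8) : coord (basisTensor i) = Pi.single i 1 := by
  funext j
  fin_cases i <;> fin_cases j <;>
    simp [coord, basisTensor, point, simpleTensor, x21, x12, y21, y22, z13, z23, unitVec,
      TBCLRS, matMulTensor]

theorem coord_sum_smul_basisTensor (g : Fin 8 → ℂ) : coord (∑ i, g i • basisTensor i) = g := by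
  funext j
  simp [map_sum, coord_basisTensor, Pi.single_apply]

theorem linearIndependent_basisTensor : LinearIndependent ℂ basisTensor :=
  Fintype.linearIndependent_iff.mpr fun g hg i => by
    rw [← coord_sum_smul_basisTensor g, hg, map_zero, Pi.zero_apply]

theorem simpleTensor_x21_mem {v : Fin 2 × Fin 2 → ℂ} {w : Fin 2 × Fin 3 → ℂ}
    (hv : v ∈ Submodule.span ℂ {y21, y22}) (hw : w ∈ Submodule.span ℂ {z13, z23}) :
    simpleTensor x21 v w ∈ EAS3 :=
  Submodule.subset_span <| .inl <| .inl ⟨v, hv, w, hw, rfl⟩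

theorem simpleTensor_conic_mem (s t : ℂ) :
    simpleTensor x12 (s • y21 - t • y22) (s • z23 + t • z13) ∈ EAS3 :=
  Submodule.subset_span <| .inl <| .inr ⟨s, t, rfl⟩

theorem TBCLRS_mem : TBCLRS 3 ∈ EAS3 :=
  Submodule.subset_span <| .inr rfl

theorem basisTensor_mem (i : Fin 8) : basisTensor i ∈ EAS3 := by
  have hy21 : y21 ∈ Submodule.span ℂ {y21, y22} := Submodule.subset_span (by simp)
  have hy22 : y22 ∈ Submodule.span ℂ {y21, y22} := Submodule.subset_span (by simp)
  have hz13 : z13 ∈ Submodule.span ℂ {z13, z23} := Submodule.subset_span (by simp)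
  have hz23 : z23 ∈ Submodule.span ℂ {z13, z23} := Submodule.subset_span (by simp)
  have h5 : simpleTensor x12 y21 z23 ∈ EAS3 := by
    simpa using simpleTensor_conic_mem 1 0
  have h6 : simpleTensor x12 y22 z13 ∈ EAS3 := by
    convert neg_mem (simpleTensor_conic_mem 0 1) using 1
    funext X Y Z
    simp [simpleTensor]
  fin_cases i
  · exact simpleTensor_x21_mem hy21 hz13
  · exact simpleTensor_x21_mem hy21 hz23
  · exact simpleTensor_x21_mem hy22 hz13
  · exact simpleTensor_x21_mem hy22 hz23
  · exact h5
  · exact h6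
  · show simpleTensor x12 y21 z13 - simpleTensor x12 y22 z23 ∈ EAS3
    convert sub_mem (sub_mem (simpleTensor_conic_mem 1 1) h5) (neg_mem h6) using 1
    funext X Y Z
    simp only [simpleTensor, Pi.add_apply, Pi.sub_apply, Pi.neg_apply, Pi.smul_apply, smul_eq_mul]
    ring
  · exact TBCLRS_mem

theorem eq_span_basisTensor : EAS3 = Submodule.span ℂ (Set.range basisTensor) := by
  refine le_antisymm (Submodule.span_le.mpr ?_)
    (Submodule.span_le.mpr <| Set.range_subset_iff.mpr basisTensor_mem)
  rintro _ ((⟨v, hv, w, hw, rfl⟩ | ⟨s, t, rfl⟩) | rfl)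
  · obtain ⟨p, q, rfl⟩ := Submodule.mem_span_pair.mp hv
    obtain ⟨r, r', rfl⟩ := Submodule.mem_span_pair.mp hw
    refine (Submodule.mem_span_range_iff_exists_fun ℂ).mpr
      ⟨![p * r, p * r', q * r, q * r', 0, 0, 0, 0], ?_⟩
    funext X Y Z
    simp only [Fin.sum_univ_eight, Finset.sum_apply, basisTensor, Matrix.cons_val, simpleTensor,
      Pi.add_apply, Pi.sub_apply, Pi.smul_apply, smul_eq_mul]
    ring
  · refine (Submodule.mem_span_range_iff_exists_fun ℂ).mpr
      ⟨![0, 0, 0, 0, s * s, -(t * t), s * t, 0], ?_⟩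
    funext X Y Z
    simp only [Fin.sum_univ_eight, Finset.sum_apply, basisTensor, Matrix.cons_val, simpleTensor,
      Pi.add_apply, Pi.sub_apply, Pi.smul_apply, smul_eq_mul]
    ring
  · exact Submodule.subset_span ⟨7, rfl⟩

theorem finrank_eq : Module.finrank ℂ EAS3 = 8 := by
  rw [eq_span_basisTensor, finrank_span_eq_card linearIndependent_basisTensor, Fintype.card_fin]

theorem eq_sum_coord_smul_basisTensor {T : 𝕋} (hT : T ∈ EAS3) :
    T = ∑ i, coord T i • basisTensor i := by
  rw [eq_span_basisTensor] at hT
  obtain ⟨g, rfl⟩ := (Submodule.mem_span_range_iff_exists_fun ℂ).mp hT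
  rw [coord_sum_smul_basisTensor]

theorem coord_seven_eq_zero {a : Fin 3 × Fin 2 → ℂ} {b : Fin 2 × Fin 2 → ℂ}
    {c : Fin 2 × Fin 3 → ℂ} (h : simpleTensor a b c ∈ EAS3) :
    coord (simpleTensor a b c) 7 = 0 := by
  set T := simpleTensor a b c
  have hT := eq_sum_coord_smul_basisTensor h
  have h₁ : T (1, 0) (0, 0) (0, 1) = coord T 7 := by
    conv_lhs => rw [hT]
    simp [Fin.sum_univ_eight, basisTensor, simpleTensor, x21, x12, y21, y22, z13, z23, unitVec,
      TBCLRS, matMulTensor]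
  have h₀ : T (1, 0) (0, 0) (0, 2) = 0 := by
    rw [hT]
    simp [Fin.sum_univ_eight, basisTensor, simpleTensor, x21, x12, y21, y22, z13, z23, unitVec,
      TBCLRS, matMulTensor]
  have h₂ : T (2, 0) (0, 0) (0, 2) = coord T 7 := rfl
  -- `coord T 7` sits at the two corners `x^2_1 z^1_2` and `x^3_1 z^1_3` of the rank-one slice
  -- `y^1_1`, whose corner `x^2_1 z^1_3` vanishes on all of `EAS3`
  have hminor : T (1, 0) (0, 0) (0, 1) * T (2, 0) (0, 0) (0, 2) =
      T (1, 0) (0, 0) (0, 2) * T (2, 0) (0, 0) (0, 1) :=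
    simpleTensor_apply_mul_apply_comm a b c (1, 0) (2, 0) (0, 0) (0, 1) (0, 2)
  rw [h₁, h₂, h₀, zero_mul] at hminor
  exact mul_self_eq_zero.mp hminor

section Box

variable {T : 𝕋} (hT : T ∈ EAS3) (h7 : coord T 7 = 0)
include hT h7

theorem apply_eq_zero_of_left_ne {X : Fin 3 × Fin 2} (h₁ : X ≠ (0, 1)) (h₂ : X ≠ (1, 0))
    (Y : Fin 2 × Fin 2) (Z : Fin 2 × Fin 3) : T X Y Z = 0 := by
  rw [eq_sum_coord_smul_basisTensor hT]
  simp [Fin.sum_univ_eight, basisTensor, simpleTensor, h7, x21, x12, unitVec, h₁, h₂]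

theorem apply_eq_zero_of_mid_ne {Y : Fin 2 × Fin 2} (h₁ : Y ≠ (1, 0)) (h₂ : Y ≠ (1, 1))
    (X : Fin 3 × Fin 2) (Z : Fin 2 × Fin 3) : T X Y Z = 0 := by
  rw [eq_sum_coord_smul_basisTensor hT]
  simp [Fin.sum_univ_eight, basisTensor, simpleTensor, h7, y21, y22, unitVec, h₁, h₂]

theorem apply_eq_zero_of_right_ne {Z : Fin 2 × Fin 3} (h₁ : Z ≠ (0, 2)) (h₂ : Z ≠ (1, 2))
    (X : Fin 3 × Fin 2) (Y : Fin 2 × Fin 2) : T X Y Z = 0 := by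
  rw [eq_sum_coord_smul_basisTensor hT]
  simp [Fin.sum_univ_eight, basisTensor, simpleTensor, h7, z13, z23, unitVec, h₁, h₂]

end Box

theorem apply_add_apply_eq_zero {T : 𝕋} (hT : T ∈ EAS3) :
    T (0, 1) (1, 0) (0, 2) + T (0, 1) (1, 1) (1, 2) = 0 := by
  rw [eq_sum_coord_smul_basisTensor hT]
  simp [Fin.sum_univ_eight, basisTensor, simpleTensor, x21, x12, y21, y22, z13, z23, unitVec,
    TBCLRS, matMulTensor]

theorem exists_simpleTensor_eq_of_mem {a : Fin 3 × Fin 2 → ℂ} {b : Fin 2 × Fin 2 → ℂ}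
    {c : Fin 2 × Fin 3 → ℂ} (hne : simpleTensor a b c ≠ 0) (h : simpleTensor a b c ∈ EAS3) :
    ∃ σ τ p q r r' : ℂ, (p ≠ 0 ∨ q ≠ 0) ∧ σ * (p * r + q * r') = 0 ∧
      simpleTensor a b c =
        simpleTensor (σ • x12 + τ • x21) (p • y21 + q • y22) (r • z13 + r' • z23) := by
  have h7 := coord_seven_eq_zero h
  have ha : a = a (0, 1) • x12 + a (1, 0) • x21 :=
    eq_smul_unitVec_add_smul_unitVec a (by decide) fun _ h₁ h₂ =>
      eq_zero_of_simpleTensor_slice_left hne (apply_eq_zero_of_left_ne h h7 h₁ h₂)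
  have hb : b = b (1, 0) • y21 + b (1, 1) • y22 :=
    eq_smul_unitVec_add_smul_unitVec b (by decide) fun _ h₁ h₂ =>
      eq_zero_of_simpleTensor_slice_mid hne (apply_eq_zero_of_mid_ne h h7 h₁ h₂)
  have hc : c = c (0, 2) • z13 + c (1, 2) • z23 :=
    eq_smul_unitVec_add_smul_unitVec c (by decide) fun _ h₁ h₂ =>
      eq_zero_of_simpleTensor_slice_right hne (apply_eq_zero_of_right_ne h h7 h₁ h₂)
  refine ⟨a (0, 1), a (1, 0), b (1, 0), b (1, 1), c (0, 2), c (1, 2), ?_, ?_, ?_⟩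
  · by_contra! hb0
    refine (simpleTensor_ne_zero_iff.mp hne).2.1 ?_
    rw [hb, hb0.1, hb0.2, zero_smul, zero_smul, add_zero]
  · have hconic : a (0, 1) * b (1, 0) * c (0, 2) + a (0, 1) * b (1, 1) * c (1, 2) = 0 :=
      apply_add_apply_eq_zero h
    linear_combination hconic
  · rw [← ha, ← hb, ← hc]

theorem simpleTensor_segre_mem (lam mu nu rho : ℂ) :
    simpleTensor x21 (lam • y21 + mu • y22) (nu • z13 + rho • z23) ∈ EAS3 :=
  simpleTensor_x21_mem (Submodule.mem_span_pair.mpr ⟨lam, mu, rfl⟩)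
    (Submodule.mem_span_pair.mpr ⟨nu, rho, rfl⟩)

theorem simpleTensor_line_mem (sig tau s t : ℂ) :
    simpleTensor (sig • x12 + tau • x21) (s • y21 - t • y22) (s • z23 + t • z13) ∈ EAS3 := by
  have hsplit : simpleTensor (sig • x12 + tau • x21) (s • y21 - t • y22) (s • z23 + t • z13) =
      sig • simpleTensor x12 (s • y21 - t • y22) (s • z23 + t • z13) +
        tau • simpleTensor x21 (s • y21 + (-t) • y22) (t • z13 + s • z23) := by
    funext X Y Z
    simp only [simpleTensor, Pi.add_apply, Pi.sub_apply, Pi.smul_apply, smul_eq_mul]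
    ring
  rw [hsplit]
  exact add_mem (Submodule.smul_mem _ _ (simpleTensor_conic_mem s t))
    (Submodule.smul_mem _ _ (simpleTensor_segre_mem s (-t) t s))

end EAS3

/-- `E^{AS,3}` is 8-dimensional, and its nonzero simple tensors are exactly the points of the
sub-Segre surface `[x^2_1] × ℙ⟨y^2_1,y^2_2⟩ × ℙ⟨z^1_3,z^2_3⟩` together with the points of the
one-parameter family of lines `(σ x^1_2 + τ x^2_1) ⊗ (s y^2_1 − t y^2_2) ⊗ (s z^2_3 + t z^1_3)`
joining the sub-Segre surface to the plane conic. -/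
theorem EAS3_rank_one_points :
    Module.finrank ℂ EAS3 = 8 ∧
    ∀ (a : Fin 3 × Fin 2 → ℂ) (b : Fin 2 × Fin 2 → ℂ) (c : Fin 2 × Fin 3 → ℂ),
      simpleTensor a b c ≠ 0 →
      (simpleTensor a b c ∈ EAS3 ↔
        (∃ lam mu nu rho : ℂ, simpleTensor a b c =
          simpleTensor x21 (lam • y21 + mu • y22) (nu • z13 + rho • z23)) ∨
        (∃ sig tau s t : ℂ, simpleTensor a b c =
          simpleTensor (sig • x12 + tau • x21) (s • y21 - t • y22) (s • z23 + t • z13))) := by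
  refine ⟨EAS3.finrank_eq, fun a b c hne => ⟨fun h => ?_, ?_⟩⟩
  · obtain ⟨σ, τ, p, q, r, r', hpq, hconic, heq⟩ := EAS3.exists_simpleTensor_eq_of_mem hne h
    rw [heq]
    exact simpleTensor_cases_of_mul_eq_zero x12 x21 y21 y22 z13 z23 hpq hconic
  · rintro (⟨lam, mu, nu, rho, heq⟩ | ⟨sig, tau, s, t, heq⟩) <;> rw [heq]
    · exact EAS3.simpleTensor_segre_mem lam mu nu rho
    · exact EAS3.simpleTensor_line_mem sig tau s t
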